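/- arXiv:2306.17355 — 6 statements merged into one kernel-verified Lean document; each statement's English description precedes it below -/
import Mathlib

section
/- For each t ∈ {1, …, T}, the interim payoff function v ↦ Π_t(v) is differentiable at every v in the open interval (vlo, vhi), with derivative Π_t'(v) = δ^(t−1) · F( min( max(v, v_t), v_{t−1} ) )^(N−1). -/
/-!
Write `G = F^(N-1)`, so that `(N-1) F^(N-2) f = G'`, and `m = min (max v v_t) v_{t-1}`.
Integration by parts gives
`∫_{v_t}^{m} (v - x) G'(x) dx = (v - m) G(m) - (v - v_t) G(v_t) + ∫_{v_t}^{m} G`.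
The clamp `y ↦ min (max y v_t) v_{t-1}` is the identity on `[v_t, v_{t-1}]` and equals `m`
between `m` and `v`, so `(v - m) G(m) + ∫_{v_t}^{m} G = ∫_{v_t}^{v} G(clamp y) dy`. Hence `Π_t` is
`δ^(t-1)` times this integral plus a constant, and the fundamental theorem of calculus applies
to its continuous integrand at every `v`.
-/

/-- Interim payoff `Π_t(v)` from entering the period-`t` auction:
`Π_t(v) = δ^(t-1) · ( ∫_{v_t}^{min(max(v,v_t),v_{t-1})} (v-x)·(N-1)·F(x)^(N-2)·f(x) dx
          + (v - r_t)·F(v_t)^(N-1) - F(v_{t-1})^(N-1)·K )`. -/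
noncomputable def PiPayoff (δ : ℝ) (N : ℕ) (K : ℝ) (r : ℕ → ℝ) (F f : ℝ → ℝ)
    (vt : ℕ → ℝ) (t : ℕ) (v : ℝ) : ℝ :=
  δ ^ (t - 1) *
    ((∫ x in (vt t)..(min (max v (vt t)) (vt (t - 1))),
        (v - x) * ((N : ℝ) - 1) * F x ^ (N - 2) * f x)
      + (v - r t) * F (vt t) ^ (N - 1) - F (vt (t - 1)) ^ (N - 1) * K)

open Set intervalIntegral MeasureTheory

theorem min_max_eq_of_mem_uIcc {α : Type*} [LinearOrder α] {a b v y : α} (hab : a ≤ b)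
    (hy : y ∈ uIcc (min (max v a) b) v) : min (max y a) b = min (max v a) b := by
  rw [mem_uIcc] at hy
  rcases hy with ⟨h₁, h₂⟩ | ⟨h₁, h₂⟩ <;> simp only [min_def, max_def] at * <;> split_ifs at * <;>
    order

theorem min_max_mem_Icc {α : Type*} [LinearOrder α] {a b : α} (hab : a ≤ b) (v : α) :
    min (max v a) b ∈ Icc a b :=
  ⟨le_min (le_max_right v a) hab, min_le_right _ b⟩

theorem ContinuousOn.continuous_comp_min_max {α β : Type*} [LinearOrder α] [TopologicalSpace α]
    [OrderClosedTopology α] [TopologicalSpace β] {G : α → β} {a b : α} (hab : a ≤ b)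
    (hG : ContinuousOn G (Icc a b)) : Continuous fun y => G (min (max y a) b) :=
  hG.comp_continuous (by fun_prop) (min_max_mem_Icc hab)

theorem integral_comp_min_max {E : Type*} [NormedAddCommGroup E] [NormedSpace ℝ E]
    [CompleteSpace E] {G : ℝ → E} {a b : ℝ} (hab : a ≤ b) (hG : ContinuousOn G (Icc a b))
    (v : ℝ) :
    ∫ y in a..v, G (min (max y a) b) =
      (∫ y in a..min (max v a) b, G y) + (v - min (max v a) b) • G (min (max v a) b) := by
  set m := min (max v a) b
  have hm : m ∈ Icc a b := min_max_mem_Icc hab v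
  have hcont := hG.continuous_comp_min_max hab
  rw [← integral_add_adjacent_intervals (hcont.intervalIntegrable a m)
    (hcont.intervalIntegrable m v)]
  congr 1
  · refine integral_congr fun y hy => ?_
    rw [uIcc_of_le hm.1] at hy
    simp only [max_eq_left hy.1, min_eq_left (hy.2.trans hm.2)]
  · rw [integral_congr fun y hy => congrArg G (min_max_eq_of_mem_uIcc hab hy),
      intervalIntegral.integral_const]

theorem integral_sub_mul_deriv_eq {G g : ℝ → ℝ} {a m : ℝ}
    (hG : ∀ x ∈ uIcc a m, HasDerivAt G (g x) x) (hg : IntervalIntegrable g volume a m) (v : ℝ) :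
    ∫ x in a..m, (v - x) * g x = (v - m) * G m - (v - a) * G a + ∫ x in a..m, G x := by
  have hsub : ∀ x ∈ uIcc a m, HasDerivAt (fun y => v - y) (-1) x := fun x _ =>
    (hasDerivAt_id x).const_sub v
  rw [integral_mul_deriv_eq_deriv_mul hsub hG intervalIntegrable_const hg]
  simp

theorem piPayoff_eq_integral_min_max (δ K : ℝ) {N : ℕ} (hN : 1 ≤ N) (r : ℕ → ℝ) {F f : ℝ → ℝ}
    {vt : ℕ → ℝ} {t : ℕ} (hab : vt t ≤ vt (t - 1))
    (hF : ∀ x ∈ Icc (vt t) (vt (t - 1)), HasDerivAt F (f x) x)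
    (hf : ContinuousOn f (Icc (vt t) (vt (t - 1)))) (v : ℝ) :
    PiPayoff δ N K r F f vt t v =
      δ ^ (t - 1) * ((∫ y in vt t..v, F (min (max y (vt t)) (vt (t - 1))) ^ (N - 1))
        + (vt t - r t) * F (vt t) ^ (N - 1) - F (vt (t - 1)) ^ (N - 1) * K) := by
  rw [PiPayoff]
  set a := vt t
  set b := vt (t - 1)
  set m := min (max v a) b
  have hsub : uIcc a m ⊆ Icc a b := by
    rw [uIcc_of_le (min_max_mem_Icc hab v).1]
    exact Icc_subset_Icc le_rfl (min_max_mem_Icc hab v).2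
  have hFc : ContinuousOn F (Icc a b) := fun x hx => (hF x hx).continuousAt.continuousWithinAt
  have hG : ∀ x ∈ Icc a b, HasDerivAt (fun y => F y ^ (N - 1))
      (((N : ℝ) - 1) * F x ^ (N - 2) * f x) x := fun x hx =>
    ((hF x hx).fun_pow (N - 1)).congr_deriv (by rw [Nat.cast_sub hN, Nat.cast_one, Nat.sub_sub])
  have hg : ContinuousOn (fun x => ((N : ℝ) - 1) * F x ^ (N - 2) * f x) (Icc a b) := by
    fun_prop
  have hibp := integral_sub_mul_deriv_eq (fun x hx => hG x (hsub hx))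
    (hg.mono hsub).intervalIntegrable v
  simp only [← mul_assoc] at hibp
  rw [integral_comp_min_max (G := fun y => F y ^ (N - 1)) hab (hFc.pow _) v, hibp, smul_eq_mul]
  ring

theorem hasDerivAt_piPayoff (δ K : ℝ) {N : ℕ} (hN : 1 ≤ N) (r : ℕ → ℝ) {F f : ℝ → ℝ}
    {vt : ℕ → ℝ} {t : ℕ} (hab : vt t ≤ vt (t - 1))
    (hF : ∀ x ∈ Icc (vt t) (vt (t - 1)), HasDerivAt F (f x) x)
    (hf : ContinuousOn f (Icc (vt t) (vt (t - 1)))) (w : ℝ) :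
    HasDerivAt (PiPayoff δ N K r F f vt t)
      (δ ^ (t - 1) * F (min (max w (vt t)) (vt (t - 1))) ^ (N - 1)) w := by
  have hFc : ContinuousOn F (Icc (vt t) (vt (t - 1))) := fun x hx =>
    (hF x hx).continuousAt.continuousWithinAt
  have hcont := (hFc.pow (N - 1)).continuous_comp_min_max hab
  rw [funext (piPayoff_eq_integral_min_max δ K hN r hab hF hf)]
  exact (((hcont.integral_hasStrictDerivAt (vt t) w).hasDerivAt.add_const _).sub_const _).const_mul
    (δ ^ (t - 1))

theorem pi_payoff_hasDerivAt_general
    (vlo vhi : ℝ)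
    (N : ℕ) (hN : 2 ≤ N)
    (K : ℝ)
    (δ : ℝ)
    (T : ℕ)
    (r : ℕ → ℝ)
    (F f : ℝ → ℝ)
    (hFderiv : ∀ x ∈ Set.Icc vlo vhi, HasDerivAt F (f x) x)
    (hfcont : ContinuousOn f (Set.Icc vlo vhi))
    (vt : ℕ → ℝ)
    (hv0 : vt 0 = vhi)
    (hvmono : ∀ t, 1 ≤ t → t ≤ T → vt t ≤ vt (t - 1))
    (hvT : vlo ≤ vt T) :
    ∀ t, 1 ≤ t → t ≤ T → ∀ w ∈ Set.Ioo vlo vhi,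
      HasDerivAt (fun v => PiPayoff δ N K r F f vt t v)
        (δ ^ (t - 1) * F (min (max w (vt t)) (vt (t - 1))) ^ (N - 1)) w := by
  intro t ht1 htT w _
  have hanti : AntitoneOn vt (Iic T) := antitoneOn_of_succ_le ordConnected_Iic fun n _ _ hn => by
    simpa using hvmono (n + 1) (by omega) (by simpa using hn)
  have hlo : vlo ≤ vt t := hvT.trans (hanti (mem_Iic.2 htT) (mem_Iic.2 le_rfl) htT)
  have hhi : vt (t - 1) ≤ vhi :=
    hv0 ▸ hanti (mem_Iic.2 (Nat.zero_le T)) (mem_Iic.2 (by omega)) (Nat.zero_le _)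
  have hsub : Icc (vt t) (vt (t - 1)) ⊆ Icc vlo vhi := Icc_subset_Icc hlo hhi
  exact hasDerivAt_piPayoff δ K (by omega) r (hvmono t ht1 htT) (fun x hx => hFderiv x (hsub hx))
    (hfcont.mono hsub) w

/-- For each `t ∈ {1,…,T}`, the interim payoff `v ↦ Π_t(v)` is differentiable at every
`v ∈ (vlo, vhi)` with derivative `δ^(t-1) · F(min(max(v,v_t),v_{t-1}))^(N-1)`. -/
theorem pi_payoff_hasDerivAt
    (vlo vhi : ℝ) (hlohi : vlo < vhi)
    (N : ℕ) (hN : 2 ≤ N)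
    (K : ℝ) (hK : 0 < K)
    (δ : ℝ) (hδ0 : 0 < δ) (hδ1 : δ < 1)
    (T : ℕ) (hT : 1 ≤ T)
    (r : ℕ → ℝ)
    (F f : ℝ → ℝ)
    (hFderiv : ∀ x ∈ Set.Icc vlo vhi, HasDerivAt F (f x) x)
    (hfcont : ContinuousOn f (Set.Icc vlo vhi))
    (hFmono : MonotoneOn F (Set.Icc vlo vhi))
    (vt : ℕ → ℝ)
    (hv0 : vt 0 = vhi)
    (hvmono : ∀ t, 1 ≤ t → t ≤ T → vt t ≤ vt (t - 1))
    (hvT : vlo ≤ vt T) :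
    ∀ t, 1 ≤ t → t ≤ T → ∀ w ∈ Set.Ioo vlo vhi,
      HasDerivAt (fun v => PiPayoff δ N K r F f vt t v)
        (δ ^ (t - 1) * F (min (max w (vt t)) (vt (t - 1))) ^ (N - 1)) w :=
  pi_payoff_hasDerivAt_general vlo vhi N hN K δ T r F f hFderiv hfcont vt hv0 hvmono hvT
end

section
/- (Single-crossing lemma.) Let 1 ≤ t < t' ≤ T and suppose F(v_{t'}) > 0. Then the function v ↦ Π_t(v) − Π_{t'}(v) is strictly increasing on [vlo, vhi]. Moreover, if F(v_T) > 0, then Π_T − Π_{T+1} = Π_T is strictly increasing on [vlo, vhi]. -/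
open Set MeasureTheory intervalIntegral

lemma strictMonoOn_of_mul_sub_le_sub {P : ℝ → ℝ} {S : Set ℝ} {α : ℝ} (hα : 0 < α)
    (hP : ∀ v ∈ S, ∀ w ∈ S, v < w → α * (w - v) ≤ P w - P v) : StrictMonoOn P S :=
  fun v hv w hw hvw => by linarith [hP v hv w hw hvw, mul_pos hα (sub_pos.2 hvw)]

lemma strictMonoOn_sub_of_mul_sub_le_sub {P Q : ℝ → ℝ} {S : Set ℝ} {α β : ℝ} (hβα : β < α)
    (hP : ∀ v ∈ S, ∀ w ∈ S, v < w → α * (w - v) ≤ P w - P v)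
    (hQ : ∀ v ∈ S, ∀ w ∈ S, v < w → Q w - Q v ≤ β * (w - v)) :
    StrictMonoOn (fun v => P v - Q v) S :=
  strictMonoOn_of_mul_sub_le_sub (sub_pos.2 hβα) fun v hv w hw hvw => by
    linarith [hP v hv w hw hvw, hQ v hv w hw hvw, sub_mul α β (w - v)]

lemma MonotoneOn.nonneg_of_hasDerivAt {F : ℝ → ℝ} {f' a b x : ℝ} (hF : MonotoneOn F (Icc a b))
    (hx : x ∈ Ioo a b) (hd : HasDerivAt F f' x) : 0 ≤ f' := by
  rw [← hd.hasDerivWithinAt.derivWithin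
    (uniqueDiffOn_Icc (hx.1.trans hx.2) x (Ioo_subset_Icc_self hx))]
  exact hF.derivWithin_nonneg

section PositivePart

variable {g : ℝ → ℝ} {a b : ℝ}

lemma IntervalIntegrable.posPart_sub_mul (hg : IntervalIntegrable g volume a b) (v : ℝ) :
    IntervalIntegrable (fun x => (v - x)⁺ * g x) volume a b :=
  hg.continuousOn_mul (continuous_posPart.comp (continuous_sub_left v)).continuousOn

lemma integral_clamp_eq_integral_posPart (hab : a ≤ b) (hg : IntervalIntegrable g volume a b)
    (v : ℝ) :
    ∫ x in a..min (max v a) b, (v - x) * g x = ∫ x in a..b, (v - x)⁺ * g x := by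
  set c := min (max v a) b
  have hac : a ≤ c := le_min (le_max_right _ _) hab
  have hcb : c ≤ b := min_le_right _ _
  have hc : c ∈ uIcc a b := by rw [uIcc_of_le hab]; exact ⟨hac, hcb⟩
  have hg' := hg.posPart_sub_mul v
  rw [← integral_add_adjacent_intervals (hg'.mono_set (uIcc_subset_uIcc_left hc))
    (hg'.mono_set (uIcc_subset_uIcc_right hc))]
  have below : ∫ x in a..c, (v - x) * g x = ∫ x in a..c, (v - x)⁺ * g x := by
    refine integral_congr_ae (Filter.Eventually.of_forall fun x hx => ?_)
    rw [uIoc_of_le hac] at hx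
    have hxv : x ≤ v := by
      rcases le_max_iff.1 (hx.2.trans (min_le_left _ _)) with h | h
      · exact h
      · exact absurd h (not_le.2 hx.1)
    rw [posPart_eq_self.2 (sub_nonneg.2 hxv)]
  have above : ∫ x in c..b, (v - x)⁺ * g x = 0 := by
    refine (integral_congr_ae (g := fun _ => 0) (Filter.Eventually.of_forall fun x hx => ?_)).trans
      integral_zero
    rw [uIoc_of_le hcb] at hx
    have hvx : v ≤ x := by
      rcases min_lt_iff.1 hx.1 with h | h
      · exact (le_max_left _ _).trans h.le
      · exact absurd hx.2 (not_le.2 h)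
    rw [posPart_eq_zero.2 (sub_nonpos.2 hvx), zero_mul]
  rw [below, above, add_zero]

lemma posPart_sub_sub_posPart_sub_le {v w : ℝ} (hvw : v ≤ w) (x : ℝ) :
    (w - x)⁺ - (v - x)⁺ ≤ w - v := by
  rw [sub_le_iff_le_add, posPart_def]
  exact max_le (by linarith [le_posPart (v - x)]) (by linarith [posPart_nonneg (v - x)])

lemma integral_posPart_sub_mul_sub_mem_Icc (hab : a ≤ b) (hg : IntervalIntegrable g volume a b)
    (hg0 : ∀ x ∈ Ioo a b, 0 ≤ g x) {v w : ℝ} (hvw : v ≤ w) :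
    (∫ x in a..b, (w - x)⁺ * g x) - ∫ x in a..b, (v - x)⁺ * g x ∈
      Icc 0 ((w - v) * ∫ x in a..b, g x) := by
  have hdiff := (hg.posPart_sub_mul w).sub (hg.posPart_sub_mul v)
  rw [← integral_sub (hg.posPart_sub_mul w) (hg.posPart_sub_mul v),
    ← intervalIntegral.integral_const_mul]
  constructor
  · refine integral_zero.symm.trans_le
      (integral_mono_on_of_le_Ioo hab intervalIntegrable_const hdiff fun x hx => ?_)
    rw [← sub_mul]
    exact mul_nonneg (sub_nonneg.2 (posPart_mono (sub_le_sub_right hvw x))) (hg0 x hx)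
  · refine integral_mono_on_of_le_Ioo hab hdiff (hg.const_mul _) fun x hx => ?_
    rw [← sub_mul]
    exact mul_le_mul_of_nonneg_right (posPart_sub_sub_posPart_sub_le hvw x) (hg0 x hx)

end PositivePart

lemma integral_natCast_mul_pow_mul_eq_sub_pow {F f : ℝ → ℝ} {a b : ℝ} (n : ℕ)
    (hF : ∀ x ∈ uIcc a b, HasDerivAt F (f x) x) (hf : IntervalIntegrable f volume a b) :
    ∫ x in a..b, (n : ℝ) * F x ^ (n - 1) * f x = F b ^ n - F a ^ n :=
  integral_eq_sub_of_hasDerivAt (fun x hx => (hF x hx).pow n)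
    (hf.continuousOn_mul (continuousOn_const.mul ((HasDerivAt.continuousOn hF).pow _)))

section Payoff

variable {δ K : ℝ} {N : ℕ} {r : ℕ → ℝ} {F f : ℝ → ℝ} {vt : ℕ → ℝ} {s : ℕ}

lemma PiPayoff_eq_integral_posPart (hs : vt s ≤ vt (s - 1))
    (hg : IntervalIntegrable (fun x => ((N : ℝ) - 1) * F x ^ (N - 2) * f x) volume
      (vt s) (vt (s - 1))) (v : ℝ) :
    PiPayoff δ N K r F f vt s v = δ ^ (s - 1) *
      ((∫ x in vt s..vt (s - 1), (v - x)⁺ * (((N : ℝ) - 1) * F x ^ (N - 2) * f x))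
        + (v - r s) * F (vt s) ^ (N - 1) - F (vt (s - 1)) ^ (N - 1) * K) := by
  rw [PiPayoff, ← integral_clamp_eq_integral_posPart hs hg v]
  simp only [mul_assoc]

lemma PiPayoff_sub_mem_Icc (hN : 1 ≤ N) (hδ : 0 ≤ δ) (hs : vt s ≤ vt (s - 1))
    (hF : ∀ x ∈ Icc (vt s) (vt (s - 1)), HasDerivAt F (f x) x)
    (hf : ContinuousOn f (Icc (vt s) (vt (s - 1))))
    (hFmono : MonotoneOn F (Icc (vt s) (vt (s - 1)))) (hFs : 0 ≤ F (vt s))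
    {v w : ℝ} (hvw : v ≤ w) :
    PiPayoff δ N K r F f vt s w - PiPayoff δ N K r F f vt s v ∈
      Icc (δ ^ (s - 1) * F (vt s) ^ (N - 1) * (w - v))
        (δ ^ (s - 1) * F (vt (s - 1)) ^ (N - 1) * (w - v)) := by
  have hN' : ((N - 1 : ℕ) : ℝ) = (N : ℝ) - 1 := by rw [Nat.cast_sub hN, Nat.cast_one]
  have hFu : ∀ x ∈ uIcc (vt s) (vt (s - 1)), HasDerivAt F (f x) x := by rwa [uIcc_of_le hs]
  have hfu : ContinuousOn f (uIcc (vt s) (vt (s - 1))) := by rwa [uIcc_of_le hs]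
  have hg : IntervalIntegrable (fun x => ((N : ℝ) - 1) * F x ^ (N - 2) * f x) volume
      (vt s) (vt (s - 1)) :=
    (continuousOn_const.mul ((HasDerivAt.continuousOn hFu).pow _)).mul hfu |>.intervalIntegrable
  have hG : ∫ x in vt s..vt (s - 1), ((N : ℝ) - 1) * F x ^ (N - 2) * f x
      = F (vt (s - 1)) ^ (N - 1) - F (vt s) ^ (N - 1) := by
    rw [← integral_natCast_mul_pow_mul_eq_sub_pow (N - 1) hFu hfu.intervalIntegrable, hN',
      Nat.sub_sub]
  have hg0 : ∀ x ∈ Ioo (vt s) (vt (s - 1)), 0 ≤ ((N : ℝ) - 1) * F x ^ (N - 2) * f x :=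
    fun x hx =>
      have hxI := Ioo_subset_Icc_self hx
      mul_nonneg (mul_nonneg (by rw [← hN']; positivity)
        (pow_nonneg (hFs.trans (hFmono ⟨le_rfl, hs⟩ hxI hx.1.le)) _))
        (hFmono.nonneg_of_hasDerivAt hx (hF x hxI))
  obtain ⟨hlow, hup⟩ := integral_posPart_sub_mul_sub_mem_Icc hs hg hg0 hvw
  rw [hG] at hup
  rw [PiPayoff_eq_integral_posPart hs hg, PiPayoff_eq_integral_posPart hs hg, ← mul_sub,
    mul_assoc, mul_assoc]
  exact ⟨mul_le_mul_of_nonneg_left (by linarith) (pow_nonneg hδ _),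
    mul_le_mul_of_nonneg_left (by linarith) (pow_nonneg hδ _)⟩

end Payoff

theorem single_crossing_general
    (vlo vhi : ℝ)
    (N : ℕ) (hN : 2 ≤ N)
    (K : ℝ)
    (δ : ℝ) (hδ0 : 0 < δ) (hδ1 : δ < 1)
    (T : ℕ) (hT : 1 ≤ T)
    (r : ℕ → ℝ)
    (F f : ℝ → ℝ)
    (hFderiv : ∀ x ∈ Set.Icc vlo vhi, HasDerivAt F (f x) x)
    (hfcont : ContinuousOn f (Set.Icc vlo vhi))
    (hFmono : MonotoneOn F (Set.Icc vlo vhi))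
    (vt : ℕ → ℝ)
    (hv0 : vt 0 = vhi)
    (hvmono : ∀ t, 1 ≤ t → t ≤ T → vt t ≤ vt (t - 1))
    (hvT : vlo ≤ vt T) :
    (∀ t t', 1 ≤ t → t < t' → t' ≤ T → 0 < F (vt t') →
      StrictMonoOn (fun v => PiPayoff δ N K r F f vt t v - PiPayoff δ N K r F f vt t' v)
        (Set.Icc vlo vhi)) ∧
    (0 < F (vt T) →
      StrictMonoOn (fun v => PiPayoff δ N K r F f vt T v) (Set.Icc vlo vhi)) := by
  have hanti : AntitoneOn vt (Icc 0 T) := antitoneOn_of_le_sub_one ordConnected_Icc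
    fun s hs hsT _ => hvmono s (Nat.one_le_iff_ne_zero.2 (by simpa using hs)) hsT.2
  have hvt : ∀ s ≤ T, vt s ∈ Icc vlo vhi := fun s hs =>
    ⟨hvT.trans (hanti ⟨s.zero_le, hs⟩ ⟨T.zero_le, le_rfl⟩ hs),
      hv0 ▸ hanti ⟨le_rfl, T.zero_le⟩ ⟨s.zero_le, hs⟩ s.zero_le⟩
  have hFvt : ∀ s s', s ≤ s' → s' ≤ T → F (vt s') ≤ F (vt s) := fun s s' h h' =>
    hFmono (hvt s' h') (hvt s (h.trans h')) (hanti ⟨s.zero_le, h.trans h'⟩ ⟨s'.zero_le, h'⟩ h)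
  have hslope : ∀ s, 1 ≤ s → s ≤ T → 0 ≤ F (vt s) → ∀ v w, v ≤ w →
      PiPayoff δ N K r F f vt s w - PiPayoff δ N K r F f vt s v ∈
        Icc (δ ^ (s - 1) * F (vt s) ^ (N - 1) * (w - v))
          (δ ^ (s - 1) * F (vt (s - 1)) ^ (N - 1) * (w - v)) := fun s hs1 hsT hFs v w hvw =>
    have hsub := Icc_subset_Icc (hvt s hsT).1 (hvt (s - 1) (by omega)).2
    PiPayoff_sub_mem_Icc (by omega) hδ0.le (hvmono s hs1 hsT) (fun x hx => hFderiv x (hsub hx))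
      (hfcont.mono hsub) (hFmono.mono hsub) hFs hvw
  refine ⟨fun t t' ht htt' ht'T hF => ?_, fun hF => strictMonoOn_of_mul_sub_le_sub
    (by positivity) fun v _ w _ hvw => (hslope T hT le_rfl hF.le v w hvw.le).1⟩
  have hFt := hF.trans_le (hFvt t t' htt'.le ht'T)
  refine strictMonoOn_sub_of_mul_sub_le_sub ?_
    (fun v _ w _ hvw => (hslope t ht (by omega) hFt.le v w hvw.le).1)
    (fun v _ w _ hvw => (hslope t' (by omega) ht'T hF.le v w hvw.le).2)
  calc δ ^ (t' - 1) * F (vt (t' - 1)) ^ (N - 1)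
      ≤ δ ^ (t' - 1) * F (vt t) ^ (N - 1) := by
        gcongr
        · exact hF.le.trans (hFvt _ _ (by omega) ht'T)
        · exact hFvt _ _ (by omega) (by omega)
    _ < δ ^ (t - 1) * F (vt t) ^ (N - 1) :=
        mul_lt_mul_of_pos_right (pow_lt_pow_right_of_lt_one₀ hδ0 hδ1 (by omega)) (pow_pos hFt _)

/-- Single-crossing lemma: for `1 ≤ t < t' ≤ T` with `F(v_{t'}) > 0`, the map
`v ↦ Π_t(v) − Π_{t'}(v)` is strictly increasing on `[vlo, vhi]`; moreover if
`F(v_T) > 0` then `Π_T − Π_{T+1} = Π_T` is strictly increasing on `[vlo, vhi]`. -/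
theorem single_crossing
    (vlo vhi : ℝ) (hlohi : vlo < vhi)
    (N : ℕ) (hN : 2 ≤ N)
    (K : ℝ) (hK : 0 < K)
    (δ : ℝ) (hδ0 : 0 < δ) (hδ1 : δ < 1)
    (T : ℕ) (hT : 1 ≤ T)
    (r : ℕ → ℝ)
    (F f : ℝ → ℝ)
    (hFderiv : ∀ x ∈ Set.Icc vlo vhi, HasDerivAt F (f x) x)
    (hfcont : ContinuousOn f (Set.Icc vlo vhi))
    (hFmono : MonotoneOn F (Set.Icc vlo vhi))
    (vt : ℕ → ℝ)
    (hv0 : vt 0 = vhi)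
    (hvmono : ∀ t, 1 ≤ t → t ≤ T → vt t ≤ vt (t - 1))
    (hvT : vlo ≤ vt T) :
    (∀ t t', 1 ≤ t → t < t' → t' ≤ T → 0 < F (vt t') →
      StrictMonoOn (fun v => PiPayoff δ N K r F f vt t v - PiPayoff δ N K r F f vt t' v)
        (Set.Icc vlo vhi)) ∧
    (0 < F (vt T) →
      StrictMonoOn (fun v => PiPayoff δ N K r F f vt T v) (Set.Icc vlo vhi)) :=
  single_crossing_general vlo vhi N hN K δ hδ0 hδ1 T hT r F f hFderiv hfcont hFmono vt hv0 hvmono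
    hvT
end

section
/- (Simplified indifference conditions.) For each 1 ≤ t < T, the indifference equation Π_t(v_t) = Π_{t+1}(v_t) holds if and only if G(v_t)·(v_t − r_t) − K·G(v_{t−1}) = δ·( G(v_t)·(v_t − K) − ∫_{v_{t+1}}^{v_t} x·(N−1)·F(x)^(N−2)·f(x) dx − r_{t+1}·G(v_{t+1}) ). For t = T, the equation Π_T(v_T) = 0 holds if and only if G(v_T)·(v_T − r_T) = K·G(v_{T−1}). -/
lemma antitoneOn_Iic_of_le_sub_one {α : Type*} [Preorder α] {v : ℕ → α} {T : ℕ}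
    (h : ∀ t, 1 ≤ t → t ≤ T → v t ≤ v (t - 1)) : AntitoneOn v (Set.Iic T) :=
  antitoneOn_of_le_pred Set.ordConnected_Iic fun a ha haT _ => by
    simpa [Order.pred_eq_sub_one] using h a (by simpa [Nat.one_le_iff_ne_zero] using ha) haT

section RivalDensity

variable {N : ℕ} {F f : ℝ → ℝ} {a b : ℝ}

lemma HasDerivAt.pow_sub_one {f' x : ℝ} (hN : 1 ≤ N) (hF : HasDerivAt F f' x) :
    HasDerivAt (fun y => F y ^ (N - 1)) (((N : ℝ) - 1) * F x ^ (N - 2) * f') x := by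
  have hcast : ((N - 1 : ℕ) : ℝ) = (N : ℝ) - 1 := by push_cast [Nat.cast_sub hN]; ring
  simpa [hcast, Nat.sub_sub] using hF.fun_pow (N - 1)

lemma continuousOn_rivalDensity (hF : ∀ x ∈ Set.uIcc a b, HasDerivAt F (f x) x)
    (hf : ContinuousOn f (Set.uIcc a b)) :
    ContinuousOn (fun x => ((N : ℝ) - 1) * F x ^ (N - 2) * f x) (Set.uIcc a b) :=
  (continuousOn_const.mul ((HasDerivAt.continuousOn hF).pow _)).mul hf

lemma integral_rivalDensity (hN : 1 ≤ N) (hF : ∀ x ∈ Set.uIcc a b, HasDerivAt F (f x) x)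
    (hf : ContinuousOn f (Set.uIcc a b)) :
    ∫ x in a..b, ((N : ℝ) - 1) * F x ^ (N - 2) * f x = F b ^ (N - 1) - F a ^ (N - 1) :=
  intervalIntegral.integral_eq_sub_of_hasDerivAt (fun x hx => (hF x hx).pow_sub_one hN)
    (continuousOn_rivalDensity hF hf).intervalIntegrable

lemma integral_sub_mul_rivalDensity (v : ℝ) (hN : 1 ≤ N)
    (hF : ∀ x ∈ Set.uIcc a b, HasDerivAt F (f x) x) (hf : ContinuousOn f (Set.uIcc a b)) :
    ∫ x in a..b, (v - x) * ((N : ℝ) - 1) * F x ^ (N - 2) * f x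
      = v * (F b ^ (N - 1) - F a ^ (N - 1))
        - ∫ x in a..b, x * ((N : ℝ) - 1) * F x ^ (N - 2) * f x := by
  have hg := continuousOn_rivalDensity (N := N) hF hf
  have hxg : ContinuousOn (fun x => x * (((N : ℝ) - 1) * F x ^ (N - 2) * f x)) (Set.uIcc a b) :=
    continuousOn_id.mul hg
  calc ∫ x in a..b, (v - x) * ((N : ℝ) - 1) * F x ^ (N - 2) * f x
      = ∫ x in a..b, (v * (((N : ℝ) - 1) * F x ^ (N - 2) * f x)
          - x * (((N : ℝ) - 1) * F x ^ (N - 2) * f x)) := by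
        congr 1; ext x; ring
    _ = v * (∫ x in a..b, ((N : ℝ) - 1) * F x ^ (N - 2) * f x)
          - ∫ x in a..b, x * (((N : ℝ) - 1) * F x ^ (N - 2) * f x) := by
        rw [intervalIntegral.integral_sub (hg.intervalIntegrable.const_mul v)
          hxg.intervalIntegrable, intervalIntegral.integral_const_mul]
    _ = _ := by
        rw [integral_rivalDensity hN hF hf]
        simp only [mul_assoc]

end RivalDensity

section Payoff

variable {δ K : ℝ} {N : ℕ} {r : ℕ → ℝ} {F f : ℝ → ℝ} {vt : ℕ → ℝ} {t : ℕ}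

lemma PiPayoff_self (h : vt t ≤ vt (t - 1)) :
    PiPayoff δ N K r F f vt t (vt t)
      = δ ^ (t - 1) * ((vt t - r t) * F (vt t) ^ (N - 1) - F (vt (t - 1)) ^ (N - 1) * K) := by
  simp [PiPayoff, min_eq_left h]

lemma PiPayoff_succ_at_prev (h : vt (t + 1) ≤ vt t) :
    PiPayoff δ N K r F f vt (t + 1) (vt t)
      = δ ^ t *
        ((∫ x in (vt (t + 1))..(vt t), (vt t - x) * ((N : ℝ) - 1) * F x ^ (N - 2) * f x)
          + (vt t - r (t + 1)) * F (vt (t + 1)) ^ (N - 1) - F (vt t) ^ (N - 1) * K) := by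
  simp [PiPayoff, max_eq_left h]

end Payoff

theorem indifference_conditions_general
    (vlo vhi : ℝ)
    (N : ℕ) (hN : 2 ≤ N)
    (K : ℝ)
    (δ : ℝ) (hδ0 : 0 < δ)
    (T : ℕ) (hT : 1 ≤ T)
    (r : ℕ → ℝ)
    (F f : ℝ → ℝ)
    (hFderiv : ∀ x ∈ Set.Icc vlo vhi, HasDerivAt F (f x) x)
    (hfcont : ContinuousOn f (Set.Icc vlo vhi))
    (vt : ℕ → ℝ)
    (hv0 : vt 0 = vhi)
    (hvmono : ∀ t, 1 ≤ t → t ≤ T → vt t ≤ vt (t - 1))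
    (hvT : vlo ≤ vt T) :
    (∀ t, 1 ≤ t → t < T →
      (PiPayoff δ N K r F f vt t (vt t) = PiPayoff δ N K r F f vt (t + 1) (vt t) ↔
        F (vt t) ^ (N - 1) * (vt t - r t) - K * F (vt (t - 1)) ^ (N - 1) =
          δ * (F (vt t) ^ (N - 1) * (vt t - K)
            - (∫ x in (vt (t + 1))..(vt t), x * ((N : ℝ) - 1) * F x ^ (N - 2) * f x)
            - r (t + 1) * F (vt (t + 1)) ^ (N - 1)))) ∧
    (PiPayoff δ N K r F f vt T (vt T) = 0 ↔
      F (vt T) ^ (N - 1) * (vt T - r T) = K * F (vt (T - 1)) ^ (N - 1)) := by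
  have hanti := antitoneOn_Iic_of_le_sub_one hvmono
  have hmem : ∀ s ≤ T, vt s ∈ Set.Icc vlo vhi := fun s hs =>
    ⟨hvT.trans (hanti hs (Set.mem_Iic.2 le_rfl) hs),
      hv0 ▸ hanti (Nat.zero_le T) hs (Nat.zero_le s)⟩
  have hpow : ∀ s, δ ^ (s - 1) ≠ 0 := fun s => pow_ne_zero _ hδ0.ne'
  refine ⟨fun t ht1 htT => ?_, ?_⟩
  · have hsub : Set.uIcc (vt (t + 1)) (vt t) ⊆ Set.Icc vlo vhi :=
      Set.uIcc_subset_Icc (hmem _ htT) (hmem _ htT.le)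
    have hδt : δ ^ t = δ ^ (t - 1) * δ := by rw [← pow_succ, Nat.sub_add_cancel ht1]
    rw [PiPayoff_self (hvmono t ht1 htT.le),
      PiPayoff_succ_at_prev (hvmono (t + 1) le_add_self htT),
      integral_sub_mul_rivalDensity _ (by omega) (fun x hx => hFderiv x (hsub hx))
        (hfcont.mono hsub), hδt, mul_assoc, mul_right_inj' (hpow t)]
    constructor <;> intro h <;> linarith
  · rw [PiPayoff_self (hvmono T hT le_rfl), mul_eq_zero, or_iff_right (hpow T)]
    constructor <;> intro h <;> linarith

/-- Simplified indifference conditions: for `1 ≤ t < T`, `Π_t(v_t) = Π_{t+1}(v_t)` iff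
`G(v_t)(v_t − r_t) − K·G(v_{t−1}) = δ( G(v_t)(v_t − K) − ∫_{v_{t+1}}^{v_t} x dG(x)
− r_{t+1}·G(v_{t+1}) )`; and `Π_T(v_T) = 0` iff `G(v_T)(v_T − r_T) = K·G(v_{T−1})`. -/
theorem indifference_conditions
    (vlo vhi : ℝ) (hlohi : vlo < vhi)
    (N : ℕ) (hN : 2 ≤ N)
    (K : ℝ) (hK : 0 < K)
    (δ : ℝ) (hδ0 : 0 < δ) (hδ1 : δ < 1)
    (T : ℕ) (hT : 1 ≤ T)
    (r : ℕ → ℝ)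
    (F f : ℝ → ℝ)
    (hFderiv : ∀ x ∈ Set.Icc vlo vhi, HasDerivAt F (f x) x)
    (hfcont : ContinuousOn f (Set.Icc vlo vhi))
    (hFmono : MonotoneOn F (Set.Icc vlo vhi))
    (vt : ℕ → ℝ)
    (hv0 : vt 0 = vhi)
    (hvmono : ∀ t, 1 ≤ t → t ≤ T → vt t ≤ vt (t - 1))
    (hvT : vlo ≤ vt T) :
    (∀ t, 1 ≤ t → t < T →
      (PiPayoff δ N K r F f vt t (vt t) = PiPayoff δ N K r F f vt (t + 1) (vt t) ↔
        F (vt t) ^ (N - 1) * (vt t - r t) - K * F (vt (t - 1)) ^ (N - 1) =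
          δ * (F (vt t) ^ (N - 1) * (vt t - K)
            - (∫ x in (vt (t + 1))..(vt t), x * ((N : ℝ) - 1) * F x ^ (N - 2) * f x)
            - r (t + 1) * F (vt (t + 1)) ^ (N - 1)))) ∧
    (PiPayoff δ N K r F f vt T (vt T) = 0 ↔
      F (vt T) ^ (N - 1) * (vt T - r T) = K * F (vt (T - 1)) ^ (N - 1)) :=
  indifference_conditions_general vlo vhi N hN K δ hδ0 T hT r F f hFderiv hfcont vt hv0 hvmono hvT
end

section
/- (Reserve-price inversion.) Suppose G(v_t) > 0 for every 1 ≤ t ≤ T, and define, for each 1 ≤ t ≤ T, r_t = (1/G(v_t)) · ( Σ_{τ=t}^{T} (1−δ)·δ^(τ−t)·G(v_τ)·v_τ − K·G(v_{t−1}) + Σ_{τ=t}^{T−1} δ^(τ−t+1) · ∫_{v_{τ+1}}^{v_τ} x·(N−1)·F(x)^(N−2)·f(x) dx + δ^(T−t+1)·G(v_T)·v_T ). Then the simplified indifference conditions hold: for every 1 ≤ t < T, G(v_t)·(v_t − r_t) − K·G(v_{t−1}) = δ·( G(v_t)·(v_t − K) − ∫_{v_{t+1}}^{v_t} x·(N−1)·F(x)^(N−2)·f(x)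 dx − r_{t+1}·G(v_{t+1}) ), and G(v_T)·(v_T − r_T) = K·G(v_{T−1}). -/
/-!
The reserve prices are the closed-form solution of the indifference recursion, so the proof is
algebra: peeling the first term off each discounted sum in `r_t G(v_t) + K G(v_{t-1})` expresses
it through the same quantity at `t + 1`, which is the indifference condition at `t`; at `t = T`
the remaining terms collapse to `G(v_T) v_T`.
-/

open Finset

theorem Finset.sum_Icc_pow_sub_mul_eq_add {R : Type*} [CommSemiring R] (δ : R) (a : ℕ → R)
    {t T : ℕ} (h : t ≤ T) :
    ∑ τ ∈ Icc t T, δ ^ (τ - t) * a τ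
      = a t + δ * ∑ τ ∈ Icc (t + 1) T, δ ^ (τ - (t + 1)) * a τ := by
  rw [← add_sum_Ioc_eq_sum_Icc h, ← Icc_add_one_left_eq_Ioc, Nat.sub_self, pow_zero, one_mul,
    mul_sum]
  congr 1
  refine sum_congr rfl fun τ hτ => ?_
  have hτ : t + 1 ≤ τ := (mem_Icc.mp hτ).1
  rw [← mul_assoc, ← pow_succ', show τ - (t + 1) + 1 = τ - t by omega]

namespace ReservePrice

variable (δ K : ℝ) (T : ℕ) (G v I : ℕ → ℝ)

/-- `r_t G(v_t)` in the paper, with `G t = G(v_t)` and `I τ = ∫_{v_{τ+1}}^{v_τ} x dG(x)`. -/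
def revenue (t : ℕ) : ℝ :=
  (∑ τ ∈ Icc t T, (1 - δ) * δ ^ (τ - t) * G τ * v τ) - K * G (t - 1)
    + (∑ τ ∈ Icc t (T - 1), δ ^ (τ - t + 1) * I τ) + δ ^ (T - t + 1) * G T * v T

theorem revenue_add_of_lt {t : ℕ} (ht : t < T) :
    revenue δ K T G v I t + K * G (t - 1)
      = (1 - δ) * G t * v t + δ * I t + δ * (revenue δ K T G v I (t + 1) + K * G t) := by
  have hGv : ∑ τ ∈ Icc t T, (1 - δ) * δ ^ (τ - t) * G τ * v τ
      = (1 - δ) * G t * v t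
        + δ * ∑ τ ∈ Icc (t + 1) T, (1 - δ) * δ ^ (τ - (t + 1)) * G τ * v τ := by
    simp only [mul_comm (1 - δ), mul_assoc, sum_Icc_pow_sub_mul_eq_add δ _ ht.le]
  have hI : ∑ τ ∈ Icc t (T - 1), δ ^ (τ - t + 1) * I τ
      = δ * I t + δ * ∑ τ ∈ Icc (t + 1) (T - 1), δ ^ (τ - (t + 1) + 1) * I τ := by
    simp only [pow_succ', mul_assoc, ← mul_sum,
      sum_Icc_pow_sub_mul_eq_add δ _ (by omega : t ≤ T - 1)]
    ring
  have hlast : δ ^ (T - t + 1) = δ * δ ^ (T - (t + 1) + 1) := by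
    rw [← pow_succ', show T - (t + 1) + 1 + 1 = T - t + 1 by omega]
  simp only [revenue, Nat.add_sub_cancel, hGv, hI, hlast]
  ring

theorem revenue_add_self (hT : 1 ≤ T) :
    revenue δ K T G v I T + K * G (T - 1) = G T * v T := by
  simp only [revenue, Icc_self, sum_singleton, Icc_eq_empty (by omega : ¬T ≤ T - 1), sum_empty,
    Nat.sub_self, pow_zero, zero_add, pow_one]
  ring

variable {δ K T G v I}

theorem indifference_of_lt {r : ℕ → ℝ}
    (hr : ∀ t, 1 ≤ t → t ≤ T → r t * G t = revenue δ K T G v I t)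
    {t : ℕ} (ht : 1 ≤ t) (htT : t < T) :
    G t * (v t - r t) - K * G (t - 1)
      = δ * (G t * (v t - K) - I t - r (t + 1) * G (t + 1)) := by
  linear_combination δ * hr (t + 1) (by omega) htT - hr t ht htT.le
    - revenue_add_of_lt δ K T G v I htT

theorem indifference_self {r : ℕ → ℝ}
    (hr : ∀ t, 1 ≤ t → t ≤ T → r t * G t = revenue δ K T G v I t) (hT : 1 ≤ T) :
    G T * (v T - r T) = K * G (T - 1) := by
  linear_combination -hr T hT le_rfl - revenue_add_self δ K T G v I hT

end ReservePrice

theorem reserve_price_inversion_general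
    (N : ℕ)
    (K : ℝ)
    (δ : ℝ)
    (T : ℕ) (hT : 1 ≤ T)
    (F f : ℝ → ℝ)
    (vt : ℕ → ℝ)
    (hGpos : ∀ t, 1 ≤ t → t ≤ T → 0 < F (vt t) ^ (N - 1))
    (r : ℕ → ℝ)
    (hr : ∀ t, 1 ≤ t → t ≤ T →
      r t = (1 / F (vt t) ^ (N - 1)) *
        ((∑ τ ∈ Finset.Icc t T, (1 - δ) * δ ^ (τ - t) * F (vt τ) ^ (N - 1) * vt τ)
          - K * F (vt (t - 1)) ^ (N - 1)
          + (∑ τ ∈ Finset.Icc t (T - 1), δ ^ (τ - t + 1) *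
              ∫ x in (vt (τ + 1))..(vt τ), x * ((N : ℝ) - 1) * F x ^ (N - 2) * f x)
          + δ ^ (T - t + 1) * F (vt T) ^ (N - 1) * vt T)) :
    (∀ t, 1 ≤ t → t < T →
      F (vt t) ^ (N - 1) * (vt t - r t) - K * F (vt (t - 1)) ^ (N - 1) =
        δ * (F (vt t) ^ (N - 1) * (vt t - K)
          - (∫ x in (vt (t + 1))..(vt t), x * ((N : ℝ) - 1) * F x ^ (N - 2) * f x)
          - r (t + 1) * F (vt (t + 1)) ^ (N - 1))) ∧
    F (vt T) ^ (N - 1) * (vt T - r T) = K * F (vt (T - 1)) ^ (N - 1) := by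
  have hrev : ∀ t, 1 ≤ t → t ≤ T → r t * F (vt t) ^ (N - 1) =
      ReservePrice.revenue δ K T (fun t => F (vt t) ^ (N - 1)) vt
        (fun τ => ∫ x in (vt (τ + 1))..(vt τ), x * ((N : ℝ) - 1) * F x ^ (N - 2) * f x) t := by
    intro t ht htT
    rw [hr t ht htT, one_div_mul_eq_div, div_mul_cancel₀ _ (hGpos t ht htT).ne']
    rfl
  exact ⟨fun t ht htT => ReservePrice.indifference_of_lt hrev ht htT,
    ReservePrice.indifference_self hrev hT⟩

/-- Reserve-price inversion: if the reserve prices are defined from the entry thresholds by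
`r_t = (1/G(v_t)) · ( Σ_{τ=t}^{T} (1−δ)·δ^(τ−t)·G(v_τ)·v_τ − K·G(v_{t−1})
+ Σ_{τ=t}^{T−1} δ^(τ−t+1)·∫_{v_{τ+1}}^{v_τ} x dG(x) + δ^(T−t+1)·G(v_T)·v_T )`,
where `G = F^(N−1)`, then the simplified indifference conditions hold. -/
theorem reserve_price_inversion
    (vlo vhi : ℝ) (hlohi : vlo < vhi)
    (N : ℕ) (hN : 2 ≤ N)
    (K : ℝ) (hK : 0 < K)
    (δ : ℝ) (hδ0 : 0 < δ) (hδ1 : δ < 1)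
    (T : ℕ) (hT : 1 ≤ T)
    (F f : ℝ → ℝ)
    (hFderiv : ∀ x ∈ Set.Icc vlo vhi, HasDerivAt F (f x) x)
    (hfcont : ContinuousOn f (Set.Icc vlo vhi))
    (hFmono : MonotoneOn F (Set.Icc vlo vhi))
    (vt : ℕ → ℝ)
    (hv0 : vt 0 = vhi)
    (hvmono : ∀ t, 1 ≤ t → t ≤ T → vt t ≤ vt (t - 1))
    (hvT : vlo ≤ vt T)
    (hGpos : ∀ t, 1 ≤ t → t ≤ T → 0 < F (vt t) ^ (N - 1))
    (r : ℕ → ℝ)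
    (hr : ∀ t, 1 ≤ t → t ≤ T →
      r t = (1 / F (vt t) ^ (N - 1)) *
        ((∑ τ ∈ Finset.Icc t T, (1 - δ) * δ ^ (τ - t) * F (vt τ) ^ (N - 1) * vt τ)
          - K * F (vt (t - 1)) ^ (N - 1)
          + (∑ τ ∈ Finset.Icc t (T - 1), δ ^ (τ - t + 1) *
              ∫ x in (vt (τ + 1))..(vt τ), x * ((N : ℝ) - 1) * F x ^ (N - 2) * f x)
          + δ ^ (T - t + 1) * F (vt T) ^ (N - 1) * vt T)) :
    (∀ t, 1 ≤ t → t < T →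
      F (vt t) ^ (N - 1) * (vt t - r t) - K * F (vt (t - 1)) ^ (N - 1) =
        δ * (F (vt t) ^ (N - 1) * (vt t - K)
          - (∫ x in (vt (t + 1))..(vt t), x * ((N : ℝ) - 1) * F x ^ (N - 2) * f x)
          - r (t + 1) * F (vt (t + 1)) ^ (N - 1))) ∧
    F (vt T) ^ (N - 1) * (vt T - r T) = K * F (vt (T - 1)) ^ (N - 1) :=
  reserve_price_inversion_general N K δ T hT F f vt hGpos r hr
end

section
/- (Key derivative computation in the proof of revenue dominance.) Suppose v** ∈ (vlo, vhi) satisfies f(v**) > 0, F(v**) > 0, and the single-round revenue first-order condition F(v**)^(1−N)·K = v** − (1 − F(v**))/f(v**) − v_s. Then ∂R2/∂v1 (v**, v**) = δ·N·K·f(v**)·( 1 − F(v**)^(N−1) ). -/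
/-! At the diagonal `v1 = v2 = v**` the two integral terms of `R2` differentiate to
`(δ - 1)·N·φ(v**)`, where `φ` is their common integrand. This cancels the term
`N(1-δ)·(1 - F)·(F^(N-1))'·v1` coming from the first-period payoff, leaving
`N(1-δ)·F^(N-1)·(1 - F - f·(v** - v_s)) + N·f·K·(1 - δ·F^(N-1))`, and the first-order
condition says exactly that `F^(N-1)·(1 - F - f·(v** - v_s)) = -f·K`. -/

/-- Single-round expected seller revenue at entry threshold `w`. -/
noncomputable def R1 (vhi : ℝ) (N : ℕ) (K vs : ℝ) (F f : ℝ → ℝ) (w : ℝ) : ℝ :=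
  (N : ℝ) * (1 - F w) * F w ^ (N - 1) * w
    + (N : ℝ) * ∫ x in w..vhi, x * (1 - F x) * ((N : ℝ) - 1) * F x ^ (N - 2) * f x
    - (N : ℝ) * (1 - F w) * K - vs * (1 - F w ^ N)

/-- Two-period expected seller revenue at thresholds `vhi ≥ v1 ≥ v2 ≥ vlo`. -/
noncomputable def R2 (vhi : ℝ) (N : ℕ) (K vs δ : ℝ) (F f : ℝ → ℝ) (v1 v2 : ℝ) : ℝ :=
  δ ^ 2 * (N : ℝ) * (1 - F v2) * F v2 ^ (N - 1) * v2
    + (N : ℝ) * (∫ x in v1..vhi, x * (1 - F x) * ((N : ℝ) - 1) * F x ^ (N - 2) * f x)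
    + (N : ℝ) * (1 - δ) * (1 - F v1) * F v1 ^ (N - 1) * v1
    - (N : ℝ) * (1 - F v1) * K - vs * (1 - F v1 ^ N)
    + δ * ((N : ℝ) * (∫ x in v2..v1, x * (1 - F x) * ((N : ℝ) - 1) * F x ^ (N - 2) * f x)
      + (N : ℝ) * (1 - δ) * (1 - F v2) * F v2 ^ (N - 1) * v2
      - (N : ℝ) * F v1 ^ (N - 1) * (F v1 - F v2) * K
      - vs * (F v1 ^ N - F v2 ^ N))

open Set intervalIntegral

theorem hasDerivAt_integral_of_continuousOn_Icc {φ : ℝ → ℝ} {a b c d : ℝ}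
    (hφ : ContinuousOn φ (Icc a b)) (hc : c ∈ Ioo a b) (hd : d ∈ Icc a b) :
    HasDerivAt (fun u => ∫ x in d..u, φ x) (φ c) c :=
  integral_hasDerivAt_right
    (hφ.mono (uIcc_subset_Icc hd (Ioo_subset_Icc_self hc))).intervalIntegrable
    ((hφ.mono Ioo_subset_Icc_self).stronglyMeasurableAtFilter isOpen_Ioo c hc)
    (hφ.continuousAt (Icc_mem_nhds hc.1 hc.2))

theorem hasDerivAt_integral_lower_of_continuousOn_Icc {φ : ℝ → ℝ} {a b c d : ℝ}
    (hφ : ContinuousOn φ (Icc a b)) (hc : c ∈ Ioo a b) (hd : d ∈ Icc a b) :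
    HasDerivAt (fun u => ∫ x in u..d, φ x) (-φ c) c := by
  refine (hasDerivAt_integral_of_continuousOn_Icc hφ hc hd).neg.congr_of_eventuallyEq ?_
  exact Filter.Eventually.of_forall fun u => integral_symm d u

theorem natCast_mul_natCast_pred (N : ℕ) :
    (N : ℝ) * ((N - 1 : ℕ) : ℝ) = (N : ℝ) * ((N : ℝ) - 1) := by
  rcases N with _ | N <;> simp

theorem hasDerivAt_R2_fst_diag {vlo vhi : ℝ} (N : ℕ) (K vs δ : ℝ) {F f : ℝ → ℝ}
    (hF : ∀ x ∈ Icc vlo vhi, HasDerivAt F (f x) x) (hf : ContinuousOn f (Icc vlo vhi))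
    {v : ℝ} (hv : v ∈ Ioo vlo vhi) :
    HasDerivAt (fun v1 => R2 vhi N K vs δ F f v1 v)
      (N * (1 - δ) * F v ^ (N - 1) * (1 - F v - f v * (v - vs))
        + N * f v * K * (1 - δ * F v ^ (N - 1))) v := by
  set φ : ℝ → ℝ := fun x => x * (1 - F x) * ((N : ℝ) - 1) * F x ^ (N - 2) * f x
  have hFc : ContinuousOn F (Icc vlo vhi) := fun x hx => (hF x hx).continuousAt.continuousWithinAt
  have hφ : ContinuousOn φ (Icc vlo vhi) := by fun_prop
  have hFv := hF v (Ioo_subset_Icc_self hv)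
  have hupper := hasDerivAt_integral_lower_of_continuousOn_Icc hφ hv
    (right_mem_Icc.2 (hv.1.trans hv.2).le)
  have hlower := hasDerivAt_integral_of_continuousOn_Icc hφ hv (Ioo_subset_Icc_self hv)
  have hconst (c : ℝ) : HasDerivAt (fun _ : ℝ => c) 0 v := hasDerivAt_const v c
  have h1F := (hconst 1).sub hFv
  have hFN1 := hFv.pow (N - 1)
  have hFN := hFv.pow N
  have hperiod1 := ((((hconst (δ ^ 2 * N * (1 - F v) * F v ^ (N - 1) * v)).add
    (hupper.const_mul (N : ℝ))).add
    (((h1F.const_mul ((N : ℝ) * (1 - δ))).mul hFN1).mul (hasDerivAt_id v))).sub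
    ((h1F.const_mul (N : ℝ)).mul_const K)).sub ((hconst 1).sub hFN |>.const_mul vs)
  have hperiod2 := ((((hlower.const_mul (N : ℝ)).add
    (hconst (N * (1 - δ) * (1 - F v) * F v ^ (N - 1) * v))).sub
    (((hFN1.const_mul (N : ℝ)).mul (hFv.sub_const (F v))).mul_const K)).sub
    ((hFN.sub_const (F v ^ N)).const_mul vs)).const_mul δ
  refine (hperiod1.add hperiod2).congr_deriv ?_
  have hpow : N - 1 - 1 = N - 2 := by omega
  simp only [φ, hpow, id_eq, Pi.sub_apply, Pi.pow_apply, Pi.mul_apply]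
  linear_combination (1 - δ) * (1 - F v) * f v * v * F v ^ (N - 2) * natCast_mul_natCast_pred N

theorem R2_partial_v1_at_diagonal_general
    (vlo vhi : ℝ)
    (N : ℕ)
    (K : ℝ)
    (vs : ℝ)
    (δ : ℝ)
    (F f : ℝ → ℝ)
    (hFderiv : ∀ x ∈ Set.Icc vlo vhi, HasDerivAt F (f x) x)
    (hfcont : ContinuousOn f (Set.Icc vlo vhi))
    (vss : ℝ) (hvss : vss ∈ Set.Ioo vlo vhi)
    (hfpos : 0 < f vss) (hFpos : 0 < F vss)
    (hFOC : (F vss ^ (N - 1))⁻¹ * K = vss - (1 - F vss) / f vss - vs) :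
    HasDerivAt (fun v1 => R2 vhi N K vs δ F f v1 vss)
      (δ * (N : ℝ) * K * f vss * (1 - F vss ^ (N - 1))) vss := by
  have hFOC' : F vss ^ (N - 1) * (1 - F vss - f vss * (vss - vs)) = -(f vss * K) := by
    field_simp at hFOC
    linear_combination hFOC
  convert hasDerivAt_R2_fst_diag N K vs δ hFderiv hfcont hvss using 1
  linear_combination (N * (δ - 1) : ℝ) * hFOC'

/-- Key derivative computation in the proof of revenue dominance: if `v** ∈ (vlo, vhi)`
satisfies `f(v**) > 0`, `F(v**) > 0`, and the single-round revenue first-order condition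
`F(v**)^(1−N)·K = v** − (1 − F(v**))/f(v**) − v_s`, then
`∂R2/∂v1 (v**, v**) = δ·N·K·f(v**)·(1 − F(v**)^(N−1))`. -/
theorem R2_partial_v1_at_diagonal
    (vlo vhi : ℝ) (hlohi : vlo < vhi)
    (N : ℕ) (hN : 2 ≤ N)
    (K : ℝ) (hK : 0 < K)
    (vs : ℝ)
    (δ : ℝ) (hδ0 : 0 < δ) (hδ1 : δ < 1)
    (F f : ℝ → ℝ)
    (hFderiv : ∀ x ∈ Set.Icc vlo vhi, HasDerivAt F (f x) x)
    (hfcont : ContinuousOn f (Set.Icc vlo vhi))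
    (hFmono : MonotoneOn F (Set.Icc vlo vhi))
    (hFhi : F vhi = 1)
    (vss : ℝ) (hvss : vss ∈ Set.Ioo vlo vhi)
    (hfpos : 0 < f vss) (hFpos : 0 < F vss)
    (hFOC : (F vss ^ (N - 1))⁻¹ * K = vss - (1 - F vss) / f vss - vs) :
    HasDerivAt (fun v1 => R2 vhi N K vs δ F f v1 vss)
      (δ * (N : ℝ) * K * f vss * (1 - F vss ^ (N - 1))) vss :=
  R2_partial_v1_at_diagonal_general vlo vhi N K vs δ F f hFderiv hfcont vss hvss hfpos hFpos hFOC
end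

section
/- (Gradient of the T-period total surplus.) For thresholds with vhi > v_1 > … > v_T > vlo, the partial derivatives of TS are: for every 1 ≤ t < T, ∂TS/∂v_t = N·δ^(t−1)·f(v_t)·( F(v_{t−1})^(N−1)·K − δ·K·F(v_t)^(N−2)·( N·F(v_t) − (N−1)·F(v_{t+1}) ) − (1 − δ)·(v_t − v_s)·F(v_t)^(N−1) ), and ∂TS/∂v_T = N·δ^(T−1)·f(v_T)·( F(v_{T−1})^(N−1)·K − (v_T − v_s)·F(v_T)^(N−1) ), where v_0 = vhi. -/
/-- T-period expected total surplus at thresholds `u : ℕ → ℝ` (with `u 0 = vhi`):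
`TS(u) = Σ_{t=1}^T δ^(t−1)·( ∫_{u_t}^{u_{t−1}} (x − v_s)·N·F(x)^(N−1)·f(x) dx
− N·F(u_{t−1})^(N−1)·(F(u_{t−1}) − F(u_t))·K ) + v_s`. -/
noncomputable def TS (N T : ℕ) (K vs δ : ℝ) (F f : ℝ → ℝ) (u : ℕ → ℝ) : ℝ :=
  (∑ t ∈ Finset.Icc 1 T, δ ^ (t - 1) *
    ((∫ x in (u t)..(u (t - 1)), (x - vs) * (N : ℝ) * F x ^ (N - 1) * f x)
      - (N : ℝ) * F (u (t - 1)) ^ (N - 1) * (F (u (t - 1)) - F (u t)) * K)) + vs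

/-!
Moving the threshold `v t` changes only the two periods it bounds: period `t`, where it enters as
the lower limit of the integral and through `F (v t)` in the entry cost, and period `t + 1`,
discounted by one more factor of `δ`, where it is the upper limit of the integral and enters the
cost through `F (v t) ^ (N - 1)`. The fundamental theorem of calculus and the product rule
differentiate these two period surpluses; for `t = T` only the first one is present.
-/

open Finset Function Filter Topology

noncomputable def periodSurplus (N : ℕ) (K vs : ℝ) (F f : ℝ → ℝ) (a b : ℝ) : ℝ :=
  (∫ x in b..a, (x - vs) * (N : ℝ) * F x ^ (N - 1) * f x)
    - (N : ℝ) * F a ^ (N - 1) * (F a - F b) * K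

theorem TS_eq_sum_periodSurplus (N T : ℕ) (K vs δ : ℝ) (F f : ℝ → ℝ) (u : ℕ → ℝ) :
    TS N T K vs δ F f u =
      (∑ t ∈ Icc 1 T, δ ^ (t - 1) * periodSurplus N K vs F f (u (t - 1)) (u t)) + vs :=
  rfl

section FundamentalTheorem

variable {ψ : ℝ → ℝ} {s : Set ℝ} {a b : ℝ}

theorem ContinuousOn.stronglyMeasurableAtFilter_of_mem_nhds (hψ : ContinuousOn ψ s)
    (hs : s ∈ 𝓝 a) : StronglyMeasurableAtFilter ψ (𝓝 a) :=
  (hψ.mono interior_subset).stronglyMeasurableAtFilter isOpen_interior a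
    (mem_interior_iff_mem_nhds.2 hs)

theorem ContinuousOn.integral_hasDerivAt_left (hψ : ContinuousOn ψ s)
    (hab : Set.uIcc a b ⊆ s) (ha : s ∈ 𝓝 a) :
    HasDerivAt (fun w => ∫ x in w..b, ψ x) (-ψ a) a :=
  intervalIntegral.integral_hasDerivAt_left ((hψ.mono hab).intervalIntegrable)
    (hψ.stronglyMeasurableAtFilter_of_mem_nhds ha) (hψ.continuousAt ha)

theorem ContinuousOn.integral_hasDerivAt_right (hψ : ContinuousOn ψ s)
    (hab : Set.uIcc a b ⊆ s) (hb : s ∈ 𝓝 b) :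
    HasDerivAt (fun w => ∫ x in a..w, ψ x) (ψ b) b :=
  intervalIntegral.integral_hasDerivAt_right ((hψ.mono hab).intervalIntegrable)
    (hψ.stronglyMeasurableAtFilter_of_mem_nhds hb) (hψ.continuousAt hb)

end FundamentalTheorem

section PeriodSurplus

variable {N : ℕ} {K vs : ℝ} {F f : ℝ → ℝ} {s : Set ℝ} {a b : ℝ}

theorem continuousOn_surplus_integrand (hF : ∀ x ∈ s, HasDerivAt F (f x) x)
    (hf : ContinuousOn f s) :
    ContinuousOn (fun x => (x - vs) * (N : ℝ) * F x ^ (N - 1) * f x) s := by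
  have hFc : ContinuousOn F s := fun x hx => (hF x hx).continuousAt.continuousWithinAt
  fun_prop

theorem hasDerivAt_periodSurplus_right (hF : ∀ x ∈ s, HasDerivAt F (f x) x)
    (hf : ContinuousOn f s) (hab : Set.uIcc a b ⊆ s) (hb : s ∈ 𝓝 b) :
    HasDerivAt (periodSurplus N K vs F f a)
      ((N : ℝ) * F a ^ (N - 1) * f b * K - (b - vs) * (N : ℝ) * F b ^ (N - 1) * f b) b := by
  have hint := (continuousOn_surplus_integrand (vs := vs) (N := N) hF hf
    ).integral_hasDerivAt_left (Set.uIcc_comm a b ▸ hab) hb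
  have hcost := (((hasDerivAt_const b (F a)).sub (hF b (mem_of_mem_nhds hb))).const_mul
    ((N : ℝ) * F a ^ (N - 1))).mul_const K
  exact (hint.sub hcost).congr_deriv (by ring)

theorem hasDerivAt_periodSurplus_left (hF : ∀ x ∈ s, HasDerivAt F (f x) x)
    (hf : ContinuousOn f s) (hab : Set.uIcc a b ⊆ s) (ha : s ∈ 𝓝 a) :
    HasDerivAt (fun w => periodSurplus N K vs F f w b)
      ((a - vs) * (N : ℝ) * F a ^ (N - 1) * f a
        - (N : ℝ) * (((N - 1 : ℕ) : ℝ) * F a ^ (N - 1 - 1) * f a * (F a - F b)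
          + F a ^ (N - 1) * f a) * K) a := by
  have hint := (continuousOn_surplus_integrand (vs := vs) (N := N) hF hf
    ).integral_hasDerivAt_right (Set.uIcc_comm a b ▸ hab) ha
  have hFa := hF a (mem_of_mem_nhds ha)
  have hcost :=
    (((hFa.fun_pow (N - 1)).const_mul (N : ℝ)).fun_mul (hFa.sub_const (F b))).mul_const K
  exact (hint.sub hcost).congr_deriv (by ring)

end PeriodSurplus

theorem hasDerivAt_sum_Icc_update {g : ℕ → ℝ → ℝ → ℝ} {u : ℕ → ℝ} {t T : ℕ}
    {d d' : ℝ} (ht : t ∈ Icc 1 T) (hcur : HasDerivAt (g t (u (t - 1))) d (u t))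
    (hnext : t < T → HasDerivAt (fun w => g (t + 1) w (u (t + 1))) d' (u t)) :
    HasDerivAt (fun w => ∑ τ ∈ Icc 1 T, g τ (update u t w (τ - 1)) (update u t w τ))
      (d + if t < T then d' else 0) (u t) := by
  rw [mem_Icc] at ht
  have hterm : ∀ τ ∈ Icc 1 T,
      HasDerivAt (fun w => g τ (update u t w (τ - 1)) (update u t w τ))
        ((if τ = t then d else 0) + if τ = t + 1 then d' else 0) (u t) := by
    intro τ hτ
    rw [mem_Icc] at hτ
    by_cases hτt : τ = t
    · subst hτt
      simpa [update_of_ne (show τ - 1 ≠ τ by omega)] using hcur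
    by_cases hτt' : τ = t + 1
    · subst hτt'
      simpa [update_of_ne (show t + 1 ≠ t by omega)] using hnext (by omega)
    simpa [hτt, hτt', update_of_ne hτt, update_of_ne (show τ - 1 ≠ t by omega)]
      using hasDerivAt_const (u t) (g τ (u (τ - 1)) (u τ))
  refine (HasDerivAt.fun_sum hterm).congr_deriv ?_
  rw [sum_add_distrib, sum_ite_eq', sum_ite_eq', if_pos (mem_Icc.2 ht)]
  by_cases h : t < T <;> simp [h, mem_Icc]

theorem hasDerivAt_TS_update {N T : ℕ} {K vs δ : ℝ} {F f : ℝ → ℝ} {s : Set ℝ}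
    {u : ℕ → ℝ} {t : ℕ} (hF : ∀ x ∈ s, HasDerivAt F (f x) x) (hf : ContinuousOn f s)
    (ht : t ∈ Icc 1 T)
    (hcur : Set.uIcc (u (t - 1)) (u t) ⊆ s) (hnext : t < T → Set.uIcc (u t) (u (t + 1)) ⊆ s)
    (hs : s ∈ 𝓝 (u t)) :
    HasDerivAt (fun w => TS N T K vs δ F f (update u t w))
      (δ ^ (t - 1) * ((N : ℝ) * F (u (t - 1)) ^ (N - 1) * f (u t) * K
          - (u t - vs) * (N : ℝ) * F (u t) ^ (N - 1) * f (u t))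
        + if t < T then δ ^ (t + 1 - 1) * ((u t - vs) * (N : ℝ) * F (u t) ^ (N - 1) * f (u t)
          - (N : ℝ) * (((N - 1 : ℕ) : ℝ) * F (u t) ^ (N - 1 - 1) * f (u t)
            * (F (u t) - F (u (t + 1))) + F (u t) ^ (N - 1) * f (u t)) * K) else 0)
      (u t) := by
  simp only [TS_eq_sum_periodSurplus]
  exact (hasDerivAt_sum_Icc_update
    (g := fun τ a b => δ ^ (τ - 1) * periodSurplus N K vs F f a b) ht
    ((hasDerivAt_periodSurplus_right hF hf hcur hs).const_mul _)
    fun hlt => (hasDerivAt_periodSurplus_left hF hf (hnext hlt) hs).const_mul _).add_const vs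

theorem TS_gradient_general
    (vlo vhi : ℝ)
    (N T : ℕ) (hN : 2 ≤ N) (hT : 1 ≤ T)
    (K : ℝ)
    (vs : ℝ)
    (δ : ℝ)
    (F f : ℝ → ℝ)
    (hFderiv : ∀ x ∈ Set.Icc vlo vhi, HasDerivAt F (f x) x)
    (hfcont : ContinuousOn f (Set.Icc vlo vhi))
    (v : ℕ → ℝ)
    (hv0 : v 0 = vhi)
    (hv1 : v 1 < vhi)
    (hvdec : ∀ t, 1 ≤ t → t < T → v (t + 1) < v t)
    (hvT : vlo < v T) :
    (∀ t, 1 ≤ t → t < T →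
      HasDerivAt (fun w => TS N T K vs δ F f (Function.update v t w))
        ((N : ℝ) * δ ^ (t - 1) * f (v t) *
          (F (v (t - 1)) ^ (N - 1) * K
            - δ * K * F (v t) ^ (N - 2) * ((N : ℝ) * F (v t) - ((N : ℝ) - 1) * F (v (t + 1)))
            - (1 - δ) * (v t - vs) * F (v t) ^ (N - 1)))
        (v t)) ∧
    HasDerivAt (fun w => TS N T K vs δ F f (Function.update v T w))
      ((N : ℝ) * δ ^ (T - 1) * f (v T) *
        (F (v (T - 1)) ^ (N - 1) * K - (v T - vs) * F (v T) ^ (N - 1)))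
      (v T) := by
  have hanti : StrictAntiOn v (Set.Iic T) := strictAntiOn_Iic_of_succ_lt fun τ hτ => by
    rcases τ with _ | τ
    · simpa [hv0] using hv1
    · exact hvdec _ (by omega) hτ
  have hle : ∀ {σ τ}, σ ≤ τ → τ ≤ T → v τ ≤ v σ := fun hστ hτ =>
    hanti.antitoneOn (by simp; omega) (by simpa using hτ) hστ
  have hmem : ∀ τ ≤ T, v τ ∈ Set.Icc vlo vhi := fun τ hτ =>
    ⟨hvT.le.trans (hle hτ le_rfl), hv0 ▸ hle τ.zero_le hτ⟩
  have hnhds : ∀ τ, 1 ≤ τ → τ ≤ T → Set.Icc vlo vhi ∈ 𝓝 (v τ) := fun τ h1 h2 =>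
    Icc_mem_nhds (hvT.trans_le (hle h2 le_rfl)) ((hle h1 h2).trans_lt hv1)
  have hderiv := fun t h1 h2 => hasDerivAt_TS_update (N := N) (K := K) (vs := vs) (δ := δ)
    hFderiv hfcont (mem_Icc.2 ⟨h1, h2⟩) (Set.uIcc_subset_Icc (hmem _ (by omega)) (hmem _ h2))
    (fun ht => Set.uIcc_subset_Icc (hmem _ h2) (hmem _ ht)) (hnhds t h1 h2)
  obtain ⟨n, rfl⟩ : ∃ n, N = n + 2 := ⟨N - 2, by omega⟩
  refine ⟨fun t h1 h2 => ?_, ?_⟩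
  · convert hderiv t h1 h2.le using 1
    obtain ⟨s, rfl⟩ : ∃ s, t = s + 1 := ⟨t - 1, by omega⟩
    simp only [if_pos h2, Nat.add_sub_cancel, pow_succ]
    push_cast
    ring
  · convert hderiv T hT le_rfl using 1
    simp only [lt_irrefl, if_false, add_zero]
    ring

/-- Gradient of the T-period total surplus: for strictly interior decreasing thresholds,
for `1 ≤ t < T`,
`∂TS/∂v_t = N·δ^(t−1)·f(v_t)·( F(v_{t−1})^(N−1)·K
  − δ·K·F(v_t)^(N−2)·(N·F(v_t) − (N−1)·F(v_{t+1})) − (1−δ)·(v_t − v_s)·F(v_t)^(N−1) )`,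
and `∂TS/∂v_T = N·δ^(T−1)·f(v_T)·( F(v_{T−1})^(N−1)·K − (v_T − v_s)·F(v_T)^(N−1) )`. -/
theorem TS_gradient
    (vlo vhi : ℝ) (hlohi : vlo < vhi)
    (N T : ℕ) (hN : 2 ≤ N) (hT : 1 ≤ T)
    (K : ℝ) (hK : 0 < K)
    (vs : ℝ)
    (δ : ℝ) (hδ0 : 0 < δ) (hδ1 : δ < 1)
    (F f : ℝ → ℝ)
    (hFderiv : ∀ x ∈ Set.Icc vlo vhi, HasDerivAt F (f x) x)
    (hfcont : ContinuousOn f (Set.Icc vlo vhi))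
    (hFmono : MonotoneOn F (Set.Icc vlo vhi))
    (v : ℕ → ℝ)
    (hv0 : v 0 = vhi)
    (hv1 : v 1 < vhi)
    (hvdec : ∀ t, 1 ≤ t → t < T → v (t + 1) < v t)
    (hvT : vlo < v T) :
    (∀ t, 1 ≤ t → t < T →
      HasDerivAt (fun w => TS N T K vs δ F f (Function.update v t w))
        ((N : ℝ) * δ ^ (t - 1) * f (v t) *
          (F (v (t - 1)) ^ (N - 1) * K
            - δ * K * F (v t) ^ (N - 2) * ((N : ℝ) * F (v t) - ((N : ℝ) - 1) * F (v (t + 1)))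
            - (1 - δ) * (v t - vs) * F (v t) ^ (N - 1)))
        (v t)) ∧
    HasDerivAt (fun w => TS N T K vs δ F f (Function.update v T w))
      ((N : ℝ) * δ ^ (T - 1) * f (v T) *
        (F (v (T - 1)) ^ (N - 1) * K - (v T - vs) * F (v T) ^ (N - 1)))
      (v T) :=
  TS_gradient_general vlo vhi N T hN hT K vs δ F f hFderiv hfcont v hv0 hv1 hvdec hvT
end
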